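/- If a class of languages L is closed under intersection with regular languages, concatenation with regular languages, and finite union, then for all m, k ≥ 1, L is closed under the iterated m-bounded right k-hairpin incompletion operation rHI*_{m,k}. -/

import Mathlib

open scoped Classical

namespace Hairpin

variable {V : Type}

/-- Reversed complement of a word under the involution `bar`. -/
def rc (bar : V → V) (w : List V) : List V := (w.map bar).reverse

/-- `w` admits a right hairpin decomposition `w = δγαβᾱ^R` with `|α| = k`, `|γ| ≤ m`. -/
def hasRightDecomp (bar : V → V) (m k : ℕ) (w : List V) : Prop :=
  ∃ δ γ α β : List V, w = δ ++ γ ++ α ++ β ++ rc bar α ∧ α.length = k ∧ γ.length ≤ m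

def hasLeftDecomp (bar : V → V) (m k : ℕ) (w : List V) : Prop :=
  ∃ α β γ δ : List V, w = α ++ β ++ rc bar α ++ γ ++ δ ∧ α.length = k ∧ γ.length ≤ m

/-- m-bounded right k-hairpin incompletion. -/
noncomputable def rHI (bar : V → V) (m k : ℕ) (w : List V) : Set (List V) :=
  if hasRightDecomp bar m k w then
    { v | ∃ δ γ α β : List V, w = δ ++ γ ++ α ++ β ++ rc bar α ∧ α.length = k ∧
          γ.length ≤ m ∧ v = w ++ rc bar γ }
  else {w}

/-- m-bounded left k-hairpin incompletion. -/
noncomputable def lHI (bar : V → V) (m k : ℕ) (w : List V) : Set (List V) :=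
  if hasLeftDecomp bar m k w then
    { v | ∃ α β γ δ : List V, w = α ++ β ++ rc bar α ++ γ ++ δ ∧ α.length = k ∧
          γ.length ≤ m ∧ v = rc bar γ ++ w }
  else {w}

/-- m-bounded k-hairpin incompletion. -/
noncomputable def HI (bar : V → V) (m k : ℕ) (w : List V) : Set (List V) :=
  rHI bar m k w ∪ lHI bar m k w

noncomputable def rHIn (bar : V → V) (m k : ℕ) (w : List V) : ℕ → Set (List V)
  | 0 => {w}
  | n + 1 => ⋃ v ∈ rHIn bar m k w n, rHI bar m k v

noncomputable def rHIstar (bar : V → V) (m k : ℕ) (w : List V) : Set (List V) :=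
  ⋃ n, rHIn bar m k w n

noncomputable def HIn (bar : V → V) (m k : ℕ) (w : List V) : ℕ → Set (List V)
  | 0 => {w}
  | n + 1 => ⋃ v ∈ HIn bar m k w n, HI bar m k v

noncomputable def HIstar (bar : V → V) (m k : ℕ) (w : List V) : Set (List V) :=
  ⋃ n, HIn bar m k w n

noncomputable def rHIstarL (bar : V → V) (m k : ℕ) (L : Set (List V)) : Set (List V) :=
  ⋃ w ∈ L, rHIstar bar m k w

noncomputable def HIL (bar : V → V) (m k : ℕ) (L : Set (List V)) : Set (List V) :=
  ⋃ w ∈ L, HI bar m k w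

noncomputable def HIstarL (bar : V → V) (m k : ℕ) (L : Set (List V)) : Set (List V) :=
  ⋃ w ∈ L, HIstar bar m k w

/-- The set `C_{m,k}(w)`. -/
def Cmk (bar : V → V) (m k : ℕ) (w : List V) : Set (List V × List V) :=
  { p | ∃ x y w₁ w₂ z : List V,
      x.length ≤ m ∧ y.length = k ∧ w = w₁ ++ (x ++ y) ++ w₂ ∧
      z.length ≤ k ∧ z <:+ w₂ ∧ z <+: rc bar y ∧ p = (x ++ y, z) }

/-- The suffix component of `D_{m,k}(w)`: all suffixes of `w` of length `i+k-1`, `0 ≤ i ≤ m`. -/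
def DmkSuf (m k : ℕ) (w : List V) : Set (List V) :=
  { s | ∃ i ≤ m, s.length = i + k - 1 ∧ s <:+ w }

noncomputable def Dmk (bar : V → V) (m k : ℕ) (w : List V) :
    Set (List V × List V) × Set (List V) :=
  (Cmk bar m k w, DmkSuf m k w)

/-- The set `C'_{m,k}(w)`. -/
def Cmk' (bar : V → V) (m k : ℕ) (w : List V) : Set (List V × List V) :=
  { p | ∃ x y w₁ w₂ z : List V,
      x.length ≤ m ∧ y.length = k ∧ w = w₁ ++ (y ++ x) ++ w₂ ∧
      z.length ≤ k ∧ z <+: w₁ ∧ z <:+ rc bar y ∧ p = (z, y ++ x) }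

/-- The prefix component of `D'_{m,k}(w)`. -/
def DmkPref (m k : ℕ) (w : List V) : Set (List V) :=
  { s | ∃ i ≤ m, s.length = i + k - 1 ∧ s <+: w }

noncomputable def Dmk' (bar : V → V) (m k : ℕ) (w : List V) :
    Set (List V × List V) × Set (List V) :=
  (Cmk' bar m k w, DmkPref m k w)

noncomputable def Emk (bar : V → V) (m k : ℕ) (w : List V) :=
  (Dmk bar m k w, Dmk' bar m k w)


/-- View a set of words as a `Language`. -/
def lang {V : Type} (L : Set (List V)) : Language V := L


/-!
Which blocks may be appended to a word `v` depends only on the finite datum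
`hairpinState m k v`: the factors of length at most `m + k` followed by at least `k` letters,
together with the last `m + 2k` letters of `v`. This datum is a right congruence of finite index,
so its fibres are regular, and the words `x` such that `w ++ x` is reachable from `w` depend only
on the state of `w` and form a regular language: by Myhill–Nerode, its left quotient by `y` is
determined by the finitely many pairs (state, unfinished block) reachable while reading `y`.
Hence `rHI*(L)` is a finite union of languages `(L ∩ fibre) · (regular language)`.
-/

open Relation Set

section AppendSystems

variable {α : Type} {σ : Type*} {B : List α → Set (List α)} {f : List α → σ}

def AppendStep (B : List α → Set (List α)) (v v' : List α) : Prop :=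
  ∃ u ∈ B v, v' = v ++ u

def extensions (B : List α → Set (List α)) (w : List α) : Set (List α) :=
  {x | ReflTransGen (AppendStep B) w (w ++ x)}

def IsRightCongruence (f : List α → σ) : Prop :=
  ∀ ⦃v v'⦄, f v = f v' → ∀ u, f (v ++ u) = f (v' ++ u)

lemma IsRightCongruence.isRegular_fiber (hf : IsRightCongruence f) (hfin : (range f).Finite)
    (q : σ) : (lang {w | f w = q}).IsRegular := by
  refine .of_finite_range_leftQuotient <|
    (hfin.image fun s => {z | ∃ y, f y = s ∧ f (y ++ z) = q}).subset ?_
  rintro _ ⟨x, rfl⟩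
  refine ⟨f x, ⟨x, rfl⟩, Set.ext fun z => ⟨?_, fun h => ⟨x, rfl, h⟩⟩⟩
  rintro ⟨y, hy, h⟩
  rwa [hf hy z] at h

lemma prefix_of_reflTransGen_appendStep {v v' : List α}
    (h : ReflTransGen (AppendStep B) v v') : v <+: v' := by
  induction h with
  | refl => exact List.prefix_refl v
  | tail _ hstep ih =>
    obtain ⟨u, -, rfl⟩ := hstep
    exact ih.trans (List.prefix_append _ u)

lemma image_append_extensions (w : List α) :
    (w ++ ·) '' extensions B w = {v | ReflTransGen (AppendStep B) w v} := by
  ext v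
  refine ⟨fun ⟨x, hx, hv⟩ => hv ▸ hx, fun h => ?_⟩
  obtain ⟨x, rfl⟩ := prefix_of_reflTransGen_appendStep h
  exact ⟨x, h, rfl⟩

lemma append_mem_extensions {w y x : List α} (hy : y ∈ extensions B w)
    (hx : x ∈ extensions B (w ++ y)) : y ++ x ∈ extensions B w := by
  have := hy.trans hx
  rwa [List.append_assoc] at this

lemma extensions_subset_of_eq (hf : IsRightCongruence f)
    (hB : ∀ ⦃v v'⦄, f v = f v' → B v = B v') {w w' : List α} (hw : f w = f w') :
    extensions B w ⊆ extensions B w' := by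
  suffices ∀ v, ReflTransGen (AppendStep B) w v →
      ∃ x, v = w ++ x ∧ ReflTransGen (AppendStep B) w' (w' ++ x) by
    intro x hx
    obtain ⟨x', hx', h⟩ := this _ hx
    rwa [List.append_cancel_left hx']
  intro v h
  induction h with
  | refl => exact ⟨[], by simp, by simpa using ReflTransGen.refl⟩
  | tail _ hstep ih =>
    obtain ⟨x, rfl, hx⟩ := ih
    obtain ⟨u, hu, rfl⟩ := hstep
    rw [hB (hf hw x)] at hu
    exact ⟨x ++ u, by simp, hx.tail ⟨u, hu, by simp⟩⟩

lemma extensions_congr (hf : IsRightCongruence f) (hB : ∀ ⦃v v'⦄, f v = f v' → B v = B v')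
    {w w' : List α} (hw : f w = f w') : extensions B w = extensions B w' :=
  (extensions_subset_of_eq hf hB hw).antisymm (extensions_subset_of_eq hf hB hw.symm)

lemma nil_mem_extensions (w : List α) : [] ∈ extensions B w := by
  simpa [extensions] using ReflTransGen.refl

/-- Split at the last block that starts inside `y`. -/
lemma exists_split_of_append_mem_extensions {m : ℕ} (hlen : ∀ v, ∀ u ∈ B v, u.length ≤ m)
    {w y z : List α} (h : y ++ z ∈ extensions B w) :
    ∃ y₁ r, y = y₁ ++ r ∧ r.length ≤ m ∧ y₁ ∈ extensions B w ∧
      r ++ z ∈ extensions B (w ++ y₁) := by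
  change ReflTransGen (AppendStep B) w (w ++ (y ++ z)) at h
  generalize hb : w ++ (y ++ z) = b at h
  induction h using ReflTransGen.head_induction_on generalizing y with
  | refl =>
    obtain ⟨rfl, rfl⟩ : y = [] ∧ z = [] := by simpa using hb
    exact ⟨[], [], rfl, Nat.zero_le _, nil_mem_extensions _, nil_mem_extensions _⟩
  | head hstep hrest ih =>
    obtain ⟨u, hu, rfl⟩ := hstep
    obtain ⟨t, ht⟩ := prefix_of_reflTransGen_appendStep hrest
    rw [← hb, List.append_assoc, List.append_cancel_left_eq] at ht
    rcases List.append_eq_append_iff.mp ht with ⟨y', rfl, rfl⟩ | ⟨r, rfl, rfl⟩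
    · obtain ⟨y₁, r, rfl, hr, hy₁, hz⟩ := ih (y := y') (by rw [← hb]; simp)
      refine ⟨u ++ y₁, r, (List.append_assoc ..).symm, hr, ?_, ?_⟩
      · simpa only [extensions, mem_ofPred_eq, List.append_assoc]
          using ReflTransGen.head ⟨u, hu, rfl⟩ hy₁
      · simpa only [List.append_assoc] using hz
    · refine ⟨[], y, rfl, le_trans (by simp) (hlen _ _ hu), nil_mem_extensions _, ?_⟩
      change ReflTransGen _ _ _
      rw [List.append_nil, hb]
      exact ReflTransGen.head ⟨_, hu, rfl⟩ hrest

theorem isRegular_extensions [Finite α] {m : ℕ} (hf : IsRightCongruence f)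
    (hfin : (range f).Finite) (hB : ∀ ⦃v v'⦄, f v = f v' → B v = B v')
    (hlen : ∀ v, ∀ u ∈ B v, u.length ≤ m) (w : List α) :
    (lang (extensions B w)).IsRegular := by
  set D : List α → Set (σ × List α) := fun y =>
    {p | ∃ y₁ r, y = y₁ ++ r ∧ r.length ≤ m ∧ y₁ ∈ extensions B w ∧
      p = (f (w ++ y₁), r)}
  set H : Set (σ × List α) → Language α := fun S =>
    {z | ∃ v r, (f v, r) ∈ S ∧ r ++ z ∈ extensions B v}
  have hquot : ∀ y, (lang (extensions B w)).leftQuotient y = H (D y) := by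
    intro y
    ext z
    change y ++ z ∈ extensions B w ↔ _
    constructor
    · intro h
      obtain ⟨y₁, r, rfl, hr, hy₁, hz⟩ := exists_split_of_append_mem_extensions hlen h
      exact ⟨w ++ y₁, r, ⟨y₁, r, rfl, hr, hy₁, rfl⟩, hz⟩
    · rintro ⟨v, r, ⟨y₁, r, rfl, -, hy₁, hp⟩, hz⟩
      obtain ⟨hv, rfl⟩ := Prod.mk.inj hp
      rw [extensions_congr hf hB hv] at hz
      simpa only [List.append_assoc] using append_mem_extensions hy₁ hz
  have hD : range D ⊆ 𝒫 (range f ×ˢ {r | r.length ≤ m}) := by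
    rintro _ ⟨y, rfl⟩ _ ⟨y₁, r, -, hr, -, rfl⟩
    exact ⟨mem_range_self _, hr⟩
  refine .of_finite_range_leftQuotient <|
    (((hfin.prod (List.finite_length_le α m)).finite_subsets.subset hD).image H).subset ?_
  rintro _ ⟨y, rfl⟩
  exact ⟨D y, mem_range_self y, (hquot y).symm⟩

lemma biUnion_image_append_extensions (hf : IsRightCongruence f)
    (hB : ∀ ⦃v v'⦄, f v = f v' → B v = B v') {R : Set (List α)}
    (hR : ∀ w, ∃ w₀ ∈ R, f w₀ = f w) (L : Set (List α)) :
    ⋃ w ∈ L, (w ++ ·) '' extensions B w =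
      ⋃ w₀ ∈ R, image2 (· ++ ·) (L ∩ {w | f w = f w₀}) (extensions B w₀) := by
  ext v
  simp only [mem_iUnion, mem_image, mem_image2, exists_prop]
  constructor
  · rintro ⟨w, hw, x, hx, rfl⟩
    obtain ⟨w₀, hw₀, hf₀⟩ := hR w
    rw [extensions_congr hf hB hf₀.symm] at hx
    exact ⟨w₀, hw₀, w, ⟨hw, hf₀.symm⟩, x, hx, rfl⟩
  · rintro ⟨w₀, -, w, ⟨hw, hf₀⟩, x, hx, rfl⟩
    exact ⟨w, hw, x, extensions_congr hf hB hf₀.symm ▸ hx, rfl⟩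

lemma exists_finite_transversal {β : Type*} (f : β → σ) (hfin : (range f).Finite) :
    ∃ R : Set β, R.Finite ∧ ∀ b, ∃ b₀ ∈ R, f b₀ = f b := by
  obtain ⟨R, -, hR⟩ := (univ : Set β).exists_subset_bijOn f
  refine ⟨R, Finite.of_finite_image ?_ hR.injOn,
    fun b => hR.surjOn (mem_image_of_mem f (mem_univ b))⟩
  rwa [hR.image_eq, image_univ]

end AppendSystems

theorem _root_.List.rtake_append_of_le_length {α : Type*} {l₁ l₂ : List α} {n : ℕ}
    (h : n ≤ l₂.length) : (l₁ ++ l₂).rtake n = l₂.rtake n := by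
  simp [List.rtake_eq_reverse_take_reverse, List.take_append_of_le_length, h]

theorem _root_.List.rtake_append_length {α : Type*} (l₁ l₂ : List α) :
    (l₁ ++ l₂).rtake l₂.length = l₂ := by
  rw [List.rtake_append_of_le_length le_rfl]
  simp [List.rtake]

theorem _root_.List.rtake_rtake {α : Type*} (l : List α) {k n : ℕ} (h : k ≤ n) :
    (l.rtake n).rtake k = l.rtake k := by
  simp [List.rtake_eq_reverse_take_reverse, List.take_take, min_eq_left h]

theorem _root_.List.rtake_append_rtake {α : Type*} (l₁ l₂ : List α) (n : ℕ) :
    (l₁.rtake n ++ l₂).rtake n = (l₁ ++ l₂).rtake n := by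
  simp [List.rtake_eq_reverse_take_reverse, List.take_append, List.take_take]

section RightHairpin

variable {V : Type} {bar : V → V} {m k : ℕ}

lemma length_rc (bar : V → V) (w : List V) : (rc bar w).length = w.length := by
  simp [rc]

lemma rc_rc (hbar : Function.Involutive bar) (w : List V) : rc bar (rc bar w) = w := by
  simp [rc, List.map_reverse, hbar.comp_self]

def rHIBlocks (bar : V → V) (m k : ℕ) (v : List V) : Set (List V) :=
  {u | ∃ δ γ α β, v = δ ++ γ ++ α ++ β ++ rc bar α ∧ α.length = k ∧ γ.length ≤ m ∧
    u = rc bar γ}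

lemma length_le_of_mem_rHIBlocks {v u : List V} (h : u ∈ rHIBlocks bar m k v) :
    u.length ≤ m := by
  obtain ⟨-, γ, -, -, -, -, hγ, rfl⟩ := h
  rwa [length_rc]

lemma mem_rHI_iff {v v' : List V} :
    v' ∈ rHI bar m k v ↔ ReflGen (AppendStep (rHIBlocks bar m k)) v v' := by
  rw [reflGen_iff]
  unfold rHI
  split_ifs with h
  · constructor
    · rintro ⟨δ, γ, α, β, hv, hα, hγ, rfl⟩
      exact Or.inr ⟨rc bar γ, ⟨δ, γ, α, β, hv, hα, hγ, rfl⟩, rfl⟩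
    · rintro (rfl | ⟨_, ⟨δ, γ, α, β, hv, hα, hγ, rfl⟩, rfl⟩)
      · obtain ⟨δ, γ, α, β, hv, hα, -⟩ := h
        exact ⟨δ ++ γ, [], α, β, by simp [hv], hα, by simp, by simp [rc]⟩
      · exact ⟨δ, γ, α, β, hv, hα, hγ, rfl⟩
  · refine ⟨Or.inl, ?_⟩
    rintro (rfl | ⟨_, ⟨δ, γ, α, β, hv, hα, hγ, rfl⟩, rfl⟩)
    · rfl
    · exact absurd ⟨δ, γ, α, β, hv, hα, hγ⟩ h

lemma rHIstar_eq (w : List V) :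
    rHIstar bar m k w = {v | ReflTransGen (AppendStep (rHIBlocks bar m k)) w v} := by
  have hrel : (fun v v' => v' ∈ rHI bar m k v) = ReflGen (AppendStep (rHIBlocks bar m k)) := by
    ext v v'
    exact mem_rHI_iff
  rw [← reflTransGen_reflGen, ← hrel]
  ext v
  simp only [rHIstar, mem_iUnion]
  constructor
  · rintro ⟨n, hv⟩
    induction n generalizing v with
    | zero =>
      obtain rfl : v = w := hv
      exact .refl
    | succ n ih =>
      simp only [rHIn, mem_iUnion₂] at hv
      obtain ⟨v', hv', hv⟩ := hv
      exact (ih v' hv').tail hv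
  · intro h
    induction h with
    | refl => exact ⟨0, rfl⟩
    | tail _ hstep ih =>
      obtain ⟨n, hn⟩ := ih
      exact ⟨n + 1, mem_iUnion₂.mpr ⟨_, hn, hstep⟩⟩

lemma rHIstarL_eq (L : Set (List V)) :
    rHIstarL bar m k L = ⋃ w ∈ L, (w ++ ·) '' extensions (rHIBlocks bar m k) w := by
  simp only [rHIstarL, rHIstar_eq, image_append_extensions]

def shortFactors (m k : ℕ) (v : List V) : Set (List V) :=
  {t | t.length ≤ m + k ∧ ∃ p q, v = p ++ t ++ q ∧ k ≤ q.length}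

lemma shortFactors_mono {v v' : List V} (h : v <:+: v') :
    shortFactors m k v ⊆ shortFactors m k v' := by
  obtain ⟨a, b, rfl⟩ := h
  rintro t ⟨ht, p, q, rfl, hq⟩
  exact ⟨ht, a ++ p, q ++ b, by simp, by simp only [List.length_append]; omega⟩

/-- A factor followed by fewer than `|u| + k` letters of `v ++ u` starts within the last `m + 2k`
letters of `v`. -/
lemma shortFactors_append (m k : ℕ) (v u : List V) :
    shortFactors m k (v ++ u) =
      shortFactors m k v ∪ shortFactors m k (v.rtake (m + 2 * k) ++ u) := by
  have hv : v.rdrop (m + 2 * k) ++ v.rtake (m + 2 * k) = v := List.take_append_drop _ v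
  refine subset_antisymm ?_ (union_subset (shortFactors_mono (List.infix_append [] v u))
    (shortFactors_mono ?_))
  · rintro t ⟨ht, p, q, hpq, hq⟩
    by_cases hqu : u.length + k ≤ q.length
    · obtain ⟨q₁, rfl⟩ : u <:+ q := List.suffix_of_suffix_length_le (List.suffix_append v u)
        (hpq ▸ List.suffix_append _ q) (by omega)
      refine Or.inl ⟨ht, p, q₁, List.append_cancel_right (by simpa using hpq), ?_⟩
      simp only [List.length_append] at hqu
      omega
    · have hlen := congrArg List.length hpq
      simp only [List.length_append] at hlen
      obtain ⟨p₁, rfl⟩ : v.rdrop (m + 2 * k) <+: p := List.prefix_of_prefix_length_le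
        ((List.take_prefix _ v).trans (List.prefix_append v u))
        (by rw [hpq, List.append_assoc]; exact List.prefix_append _ _)
        (by simp only [List.rdrop, List.length_take]; omega)
      refine Or.inr ⟨ht, p₁, q, List.append_cancel_left (as := v.rdrop (m + 2 * k)) ?_, hq⟩
      rw [← List.append_assoc, hv, hpq]
      simp
  · exact ⟨v.rdrop (m + 2 * k), [], by rw [List.append_nil, ← List.append_assoc, hv]⟩

def hairpinState (m k : ℕ) (v : List V) : Set (List V) × List V :=
  (shortFactors m k v, v.rtake (m + 2 * k))

lemma isRightCongruence_hairpinState (m k : ℕ) :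
    IsRightCongruence (hairpinState (V := V) m k) := by
  intro v v' h u
  obtain ⟨h₁, h₂⟩ := Prod.mk.inj h
  refine Prod.ext ?_ ?_
  · change shortFactors m k (v ++ u) = shortFactors m k (v' ++ u)
    rw [shortFactors_append m k v, shortFactors_append m k v', h₁, h₂]
  · simp only [hairpinState]
    rw [← List.rtake_append_rtake, h₂, List.rtake_append_rtake]

lemma finite_range_hairpinState [Finite V] (m k : ℕ) :
    (range (hairpinState (V := V) m k)).Finite := by
  refine ((List.finite_length_le V (m + k)).finite_subsets.prod
    (List.finite_length_le V (m + 2 * k))).subset ?_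
  rintro _ ⟨v, rfl⟩
  refine ⟨fun t ht => ht.1, ?_⟩
  simp only [hairpinState, List.rtake, mem_ofPred_eq, List.length_drop]
  omega

lemma mem_rHIBlocks_iff (hbar : Function.Involutive bar) {v u : List V} :
    u ∈ rHIBlocks bar m k v ↔
      ∃ γ, γ.length ≤ m ∧ γ ++ rc bar (v.rtake k) ∈ shortFactors m k v ∧
        u = rc bar γ := by
  constructor
  · rintro ⟨δ, γ, α, β, hv, hα, hγ, rfl⟩
    have hsuffix : v.rtake k = rc bar α := by
      rw [hv, ← hα, ← length_rc bar α, List.rtake_append_length]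
    refine ⟨γ, hγ, ⟨?_, δ, β ++ rc bar α, ?_, ?_⟩, rfl⟩
    · simp only [hsuffix, rc_rc hbar, List.length_append]
      omega
    · rw [hsuffix, rc_rc hbar, hv]
      simp
    · simp only [List.length_append, length_rc]
      omega
  · rintro ⟨γ, hγ, ⟨-, p, q, hv, hq⟩, rfl⟩
    have hsuffix : v.rtake k = q.rtake k := by rw [hv, List.rtake_append_of_le_length hq]
    refine ⟨p, γ, rc bar (v.rtake k), q.rdrop k, ?_, ?_, hγ, rfl⟩
    · rw [rc_rc hbar]
      nth_rewrite 1 [hv]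
      rw [hsuffix]
      simp only [List.append_assoc, List.rdrop, List.rtake, List.take_append_drop]
    · have hlen := congrArg List.length hv
      simp only [List.length_append] at hlen
      simp only [length_rc, List.rtake, List.length_drop]
      omega

lemma rHIBlocks_congr (hbar : Function.Involutive bar) ⦃v v' : List V⦄
    (h : hairpinState m k v = hairpinState m k v') :
    rHIBlocks bar m k v = rHIBlocks bar m k v' := by
  obtain ⟨h₁, h₂⟩ := Prod.mk.inj h
  have hsuffix : v.rtake k = v'.rtake k := by
    rw [← List.rtake_rtake v (by omega : k ≤ m + 2 * k), h₂, List.rtake_rtake]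
    omega
  ext u
  simp only [mem_rHIBlocks_iff hbar, h₁, hsuffix]

end RightHairpin

variable {V : Type} [Fintype V]

theorem class_closed_rHIstar_general (bar : V → V) (hbar : ∀ a, bar (bar a) = a) (m k : ℕ)
    (𝓛 : Set (Set (List V)))
    (hInter : ∀ L ∈ 𝓛, ∀ R : Set (List V), Language.IsRegular (lang R) → L ∩ R ∈ 𝓛)
    (hConcatR : ∀ L ∈ 𝓛, ∀ R : Set (List V), Language.IsRegular (lang R) →
      Set.image2 (· ++ ·) L R ∈ 𝓛)
    (hUnion : ∀ L₁ ∈ 𝓛, ∀ L₂ ∈ 𝓛, L₁ ∪ L₂ ∈ 𝓛) :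
    ∀ L ∈ 𝓛, rHIstarL bar m k L ∈ 𝓛 := by
  intro L hL
  have hf := isRightCongruence_hairpinState (V := V) m k
  have hfin := finite_range_hairpinState (V := V) m k
  have hB := rHIBlocks_congr (bar := bar) (m := m) (k := k) hbar
  obtain ⟨R, hRfin, hR⟩ := exists_finite_transversal _ hfin
  rw [rHIstarL_eq, biUnion_image_append_extensions hf hB hR]
  refine SupClosed.biSup_mem_of_nonempty (fun _ h₁ _ h₂ => hUnion _ h₁ _ h₂) hRfin
    ((hR []).imp fun _ h => h.1) fun w₀ _ => ?_
  exact hConcatR _ (hInter L hL _ (hf.isRegular_fiber hfin _)) _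
    (isRegular_extensions hf hfin hB (fun _ _ => length_le_of_mem_rHIBlocks) w₀)

theorem class_closed_rHIstar (bar : V → V) (hbar : ∀ a, bar (bar a) = a) (m k : ℕ) (hm : 1 ≤ m) (hk : 1 ≤ k)
    (𝓛 : Set (Set (List V)))
    (hInter : ∀ L ∈ 𝓛, ∀ R : Set (List V), Language.IsRegular (lang R) → L ∩ R ∈ 𝓛)
    (hConcatR : ∀ L ∈ 𝓛, ∀ R : Set (List V), Language.IsRegular (lang R) →
      Set.image2 (· ++ ·) L R ∈ 𝓛)
    (hConcatL : ∀ L ∈ 𝓛, ∀ R : Set (List V), Language.IsRegular (lang R) →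
      Set.image2 (· ++ ·) R L ∈ 𝓛)
    (hUnion : ∀ L₁ ∈ 𝓛, ∀ L₂ ∈ 𝓛, L₁ ∪ L₂ ∈ 𝓛) :
    ∀ L ∈ 𝓛, rHIstarL bar m k L ∈ 𝓛 :=
  class_closed_rHIstar_general bar hbar m k 𝓛 hInter hConcatR hUnion

end Hairpin
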